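/- arXiv:2502.17667 — 4 statements merged into one kernel-verified Lean document; each statement's English description precedes it below -/
import Mathlib

section
/- For any group G and integer d ≥ 1, the Host-Kra cube group HK^[d](G) equals the product F^[d](G) · Δ^[d](G), where F^[d](G) is the subgroup of G^{2^d} generated by elements g^(α) for g ∈ G and α an upper facet of {0,1}^d (i.e. a facet containing the all-ones vertex), and Δ^[d](G) = {(g, ..., g) : g ∈ G} is the diagonal subgroup. -/
open scoped Classical Pointwise

noncomputable section

/-- A face of the cube {0,1}^d of codimension `j`: obtained by fixing the values of a
set `S` of `j` coordinates. -/
def IsFace {d : ℕ} (α : Set (Fin d → Bool)) (j : ℕ) : Prop :=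
  ∃ (S : Finset (Fin d)) (v : Fin d → Bool), S.card = j ∧ α = {ε | ∀ i ∈ S, ε i = v i}

/-- The element `g^(α)` of `G^{2^d}`: entry `g` on vertices of `α`, identity elsewhere. -/
def faceEl {G : Type*} [Group G] {d : ℕ} (α : Set (Fin d → Bool)) (g : G) :
    (Fin d → Bool) → G :=
  fun ε => if ε ∈ α then g else 1

/-- The Host-Kra cube group of order `d` associated with `G`: the subgroup of `G^{2^d}`
generated by all `g^(α)` with `α` a facet (codimension-1 face). -/
def HK (G : Type*) [Group G] (d : ℕ) : Subgroup ((Fin d → Bool) → G) :=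
  Subgroup.closure {x | ∃ (g : G) (α : Set (Fin d → Bool)), IsFace α 1 ∧ x = faceEl α g}

/-- The face cube group: generated by `g^(α)` with `α` an upper facet (a facet
containing the all-ones vertex). -/
def upperFaceCubeGroup (G : Type*) [Group G] (d : ℕ) : Subgroup ((Fin d → Bool) → G) :=
  Subgroup.closure {x | ∃ (g : G) (α : Set (Fin d → Bool)),
    IsFace α 1 ∧ (fun _ => true) ∈ α ∧ x = faceEl α g}

section Aux

variable {G : Type*} [Group G] {d : ℕ}

/-- The upper facet in direction `i`. -/
def upFacet (i : Fin d) : Set (Fin d → Bool) := {ε | ∀ j ∈ ({i} : Finset (Fin d)), ε j = true}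

lemma upFacet_isFace (i : Fin d) : IsFace (upFacet i) 1 :=
  ⟨{i}, fun _ => true, Finset.card_singleton i, rfl⟩

lemma ones_mem_upFacet (i : Fin d) : (fun _ => true) ∈ upFacet i := by
  intro j _; rfl

lemma upFacet_mem (i : Fin d) (g : G) : faceEl (upFacet i) g ∈ upperFaceCubeGroup G d :=
  Subgroup.subset_closure ⟨g, upFacet i, upFacet_isFace i, ones_mem_upFacet i, rfl⟩

lemma conj_faceEl (α : Set (Fin d → Bool)) (g h : G) :
    (fun _ => h) * faceEl α g * (fun _ => h)⁻¹ = faceEl α (h * g * h⁻¹) := by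
  funext ε
  simp only [Pi.mul_apply, Pi.inv_apply, faceEl]
  split <;> simp

lemma conj_mem_upper (x : (Fin d → Bool) → G) (hx : x ∈ upperFaceCubeGroup G d) (h : G) :
    (fun _ => h) * x * (fun _ => h)⁻¹ ∈ upperFaceCubeGroup G d := by
  induction hx using Subgroup.closure_induction with
  | mem y hy =>
    obtain ⟨g, α, hα, hones, rfl⟩ := hy
    rw [conj_faceEl]
    exact Subgroup.subset_closure ⟨h * g * h⁻¹, α, hα, hones, rfl⟩
  | one => simpa using one_mem _
  | mul y z _ _ hy hz =>
    have : (fun _ => h) * (y * z) * (fun _ => h)⁻¹ =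
        ((fun _ => h) * y * (fun _ => h)⁻¹) * ((fun _ => h) * z * (fun _ => h)⁻¹) := by
      group
    rw [this]; exact mul_mem hy hz
  | inv y _ hy =>
    have : (fun _ => h) * y⁻¹ * (fun _ => h)⁻¹ =
        ((fun _ => h) * y * (fun _ => h)⁻¹)⁻¹ := by group
    rw [this]; exact inv_mem hy

end Aux

/-- `HK^[d](G) = F^[d](G) · Δ^[d](G)`. -/
theorem stmt0 (G : Type*) [Group G] (d : ℕ) (hd : 1 ≤ d) :
    (HK G d : Set ((Fin d → Bool) → G)) =
      (upperFaceCubeGroup G d : Set ((Fin d → Bool) → G)) *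
        {x : (Fin d → Bool) → G | ∃ g : G, x = fun _ => g} := by
  ext x
  constructor
  · intro hx
    induction hx using Subgroup.closure_induction with
    | mem y hy =>
      obtain ⟨g, α, ⟨S, v, hS, rfl⟩, rfl⟩ := hy
      obtain ⟨i, rfl⟩ := Finset.card_eq_one.mp hS
      by_cases hv : v i = true
      · refine ⟨faceEl _ g, Subgroup.subset_closure ⟨g, _, ⟨{i}, v, hS, rfl⟩, ?_, rfl⟩,
          1, ⟨1, by funext; rfl⟩, (mul_one _)⟩
        intro j hj
        simp only [Finset.mem_singleton] at hj
        subst hj; exact hv.symm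
      · have hv' : v i = false := by simpa using hv
        refine ⟨faceEl (upFacet i) g⁻¹, upFacet_mem i g⁻¹, fun _ => g, ⟨g, rfl⟩, ?_⟩
        funext ε
        simp only [Pi.mul_apply, faceEl, upFacet, Set.mem_setOf_eq, Finset.mem_singleton,
          forall_eq, hv']
        rcases Bool.eq_false_or_eq_true (ε i) with h | h <;> simp [h]
    | one => exact ⟨1, one_mem _, 1, ⟨1, by funext; rfl⟩, (mul_one 1)⟩
    | mul y z _ _ hy hz =>
      obtain ⟨f1, hf1, δ1, ⟨g1, rfl⟩, rfl⟩ := hy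
      obtain ⟨f2, hf2, δ2, ⟨g2, rfl⟩, rfl⟩ := hz
      refine ⟨f1 * ((fun _ => g1) * f2 * (fun _ => g1)⁻¹),
        mul_mem hf1 (conj_mem_upper f2 hf2 g1), fun _ => g1 * g2, ⟨g1 * g2, rfl⟩, ?_⟩
      have : (fun _ : Fin d → Bool => g1 * g2) =
          (fun _ : Fin d → Bool => g1) * (fun _ : Fin d → Bool => g2) := rfl
      rw [this]; group
    | inv y _ hy =>
      obtain ⟨f, hf, δ, ⟨g, rfl⟩, rfl⟩ := hy
      refine ⟨(fun _ => g⁻¹) * f⁻¹ * (fun _ => g⁻¹)⁻¹,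
        conj_mem_upper f⁻¹ (inv_mem hf) g⁻¹, fun _ => g⁻¹, ⟨g⁻¹, rfl⟩, ?_⟩
      have h1 : (fun _ : Fin d → Bool => g⁻¹) = (fun _ : Fin d → Bool => g)⁻¹ := rfl
      rw [h1]; group
  · rintro ⟨f, hf, δ, ⟨g, rfl⟩, rfl⟩
    have hF : upperFaceCubeGroup G d ≤ HK G d := by
      apply Subgroup.closure_mono
      rintro y ⟨g, α, hα, _, rfl⟩
      exact ⟨g, α, hα, rfl⟩
    have hΔ : (fun _ : Fin d → Bool => g) ∈ HK G d := by
      set i : Fin d := ⟨0, hd⟩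
      have hdec : (fun _ : Fin d → Bool => g) =
          faceEl (upFacet i) g * faceEl {ε | ∀ j ∈ ({i} : Finset (Fin d)), ε j = false} g := by
        funext ε
        simp only [Pi.mul_apply, faceEl, upFacet, Set.mem_setOf_eq, Finset.mem_singleton,
          forall_eq]
        rcases Bool.eq_false_or_eq_true (ε i) with h | h <;> simp [h]
      rw [hdec]
      exact mul_mem
        (Subgroup.subset_closure ⟨g, upFacet i, upFacet_isFace i, rfl⟩)
        (Subgroup.subset_closure ⟨g, _, ⟨{i}, fun _ => false, Finset.card_singleton i, rfl⟩, rfl⟩)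
    exact mul_mem (hF hf) hΔ
end
end

section
/- Let G be a group, d ≥ 1 an integer, and let G = G_1 ⊇ G_2 ⊇ ... be the lower central series of G. For every 1 ≤ j ≤ d, every g ∈ G_j, and every face α of {0,1}^d of codimension j, the element g^(α) belongs to the Host-Kra cube group HK^[d](G). -/
open scoped Classical Pointwise

noncomputable section

/-!
A face of codimension `j + 1` is the intersection of a face `α` of codimension `j` with a facet
`β`, and `⁅a, b⁆^(α ∩ β) = ⁅a^(α), b^(β)⁆`. Since `G_{j+2} = ⁅G_{j+1}, G⁆` is generated by
commutators `⁅a, b⁆` with `a ∈ G_{j+1}`, induction on `j` shows that `g ↦ g^(α)` maps `G_{j+1}`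
into `HK^[d](G)` for every face `α` of codimension `j + 1`.
-/

open scoped commutatorElement

section

variable {G : Type*} [Group G] {d : ℕ}

def faceHom (α : Set (Fin d → Bool)) : G →* (Fin d → Bool) → G where
  toFun := faceEl α
  map_one' := by funext ε; simp [faceEl]
  map_mul' a b := by funext ε; by_cases h : ε ∈ α <;> simp [faceEl, h]

@[simp]
lemma faceHom_apply (α : Set (Fin d → Bool)) (g : G) : faceHom α g = faceEl α g := rfl

lemma faceEl_inter_commutatorElement (α β : Set (Fin d → Bool)) (a b : G) :
    faceEl (α ∩ β) ⁅a, b⁆ = ⁅faceEl α a, faceEl β b⁆ := by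
  funext ε
  simp only [commutatorElement_def, Pi.mul_apply, Pi.inv_apply]
  by_cases hα : ε ∈ α <;> by_cases hβ : ε ∈ β <;> simp [faceEl, hα, hβ]

lemma IsFace.exists_eq_inter_facet {α : Set (Fin d → Bool)} {j : ℕ} (hα : IsFace α (j + 1)) :
    ∃ α' β : Set (Fin d → Bool), IsFace α' j ∧ IsFace β 1 ∧ α = α' ∩ β := by
  obtain ⟨S, v, hS, rfl⟩ := hα
  obtain ⟨i, hi⟩ : S.Nonempty := Finset.card_pos.mp (by omega)
  refine ⟨_, _, ⟨S.erase i, v, by simp [Finset.card_erase_of_mem hi, hS], rfl⟩,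
    ⟨{i}, v, Finset.card_singleton i, rfl⟩, ?_⟩
  ext ε
  simp only [Set.mem_ofPred_eq, Set.mem_inter_iff, Finset.mem_erase, Finset.mem_singleton,
    forall_eq]
  refine ⟨fun h => ⟨fun k hk => h k hk.2, h i hi⟩, fun ⟨h, hi'⟩ k hk => ?_⟩
  rcases eq_or_ne k i with rfl | hne
  exacts [hi', h k ⟨hne, hk⟩]

lemma faceEl_mem_HK_of_isFace_one {β : Set (Fin d → Bool)} (hβ : IsFace β 1) (g : G) :
    faceEl β g ∈ HK G d :=
  Subgroup.subset_closure ⟨g, β, hβ, rfl⟩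

lemma lowerCentralSeries_le_comap_faceHom (j : ℕ) :
    ∀ α : Set (Fin d → Bool), IsFace α (j + 1) →
      (⊤ : Subgroup G).lowerCentralSeries j ≤ (HK G d).comap (faceHom α) := by
  induction j with
  | zero => exact fun α hα g _ => faceEl_mem_HK_of_isFace_one hα g
  | succ j ih =>
    intro α hα
    obtain ⟨α', β, hα', hβ, rfl⟩ := hα.exists_eq_inter_facet
    rw [Subgroup.lowerCentralSeries_succ, Subgroup.commutator_le]
    intro a ha b _
    have ha' : faceEl α' a ∈ HK G d := ih α' hα' ha
    have hb' : faceEl β b ∈ HK G d := faceEl_mem_HK_of_isFace_one hβ b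
    rw [Subgroup.mem_comap, faceHom_apply, faceEl_inter_commutatorElement, commutatorElement_def]
    exact mul_mem (mul_mem (mul_mem ha' hb') (inv_mem ha')) (inv_mem hb')

end

theorem stmt3_general (G : Type*) [Group G] (d : ℕ) :
    ∀ j : ℕ, 1 ≤ j → j ≤ d → ∀ g ∈ (⊤ : Subgroup G).lowerCentralSeries (j - 1),
      ∀ α : Set (Fin d → Bool), IsFace α j → faceEl α g ∈ HK G d := by
  rintro (_ | j) hj - g hg α hα
  · omega
  · exact lowerCentralSeries_le_comap_faceHom j α hα hg

/-- for `1 ≤ j ≤ d`, `g` in the `j`-th term `G_j` of the lower central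
series (`G_1 = G`, so `G_j = lowerCentralSeries G (j-1)`), and `α` a face of
codimension `j`, the element `g^(α)` lies in `HK^[d](G)`. -/
theorem stmt3 (G : Type*) [Group G] (d : ℕ) (hd : 1 ≤ d) :
    ∀ j : ℕ, 1 ≤ j → j ≤ d → ∀ g ∈ (⊤ : Subgroup G).lowerCentralSeries (j - 1),
      ∀ α : Set (Fin d → Bool), IsFace α j → faceEl α g ∈ HK G d :=
  stmt3_general G d
end
end

section
/- Let F be a compact Hausdorff topological group acting continuously on a compact Hausdorff space Z in each variable separately (the action map F × Z → Z is separately continuous). Then the action is jointly continuous. -/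
/-!
Averaging over a Haar measure `μ` of `F`, every `φ ∈ C(Z, ℝ)` gives an `F`-invariant pseudometric
`d = orbitDist μ φ`, `d z w = ∫ |φ (f⁻¹ • z) - φ (f⁻¹ • w)| dμ(f)`; these separate the points
of `Z`. By invariance, `d (f • z) (f₀ • z₀) ≤ d z z₀ + d (f • z₀) (f₀ • z₀)`, which tends to `0` as
`(f, z) → (f₀, z₀)` once `d` is jointly continuous; compactness of `Z` then forces
`f • z → f₀ • z₀`.

Joint continuity of `d` is Grothendieck's lemma: the integral is continuous on a pointwise-compact
set `H` of continuous functions on a compact space. Such an `H` is angelic (each point of the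
closure of `A ⊆ H` is the pointwise limit of a sequence in `A`), so dominated convergence applies.
-/

open Filter Topology Set MeasureTheory

lemma MapClusterPt.eq_of_tendsto {α X : Type*} [TopologicalSpace X] [T2Space X] {l : Filter α}
    {u : α → X} {x y : X} (hx : MapClusterPt x l u) (hy : Tendsto u l (𝓝 y)) : x = y :=
  eq_of_nhds_neBot (hx.clusterPt.mono hy)

-- A cluster point `g` of `u` agrees with `h` at every `xs m`, hence at a cluster point `c` of `xs`;
-- but all the `u n` and `h` take the same values at `c` as at `x`.
theorem tendsto_apply_of_tendsto_apply_approx {K Y : Type*} [TopologicalSpace K] [CompactSpace K]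
    [TopologicalSpace Y] [T2Space Y] {H : Set (K → Y)} (hH : IsCompact H)
    (hHc : ∀ g ∈ H, Continuous g) {u : ℕ → K → Y} (hu : ∀ n, u n ∈ H) {h : K → Y}
    (hh : Continuous h) {x : K} {xs : ℕ → K}
    (hu_xs : ∀ m, Tendsto (fun n ↦ u n (xs m)) atTop (𝓝 (h (xs m))))
    (hh_xs : Tendsto (h ∘ xs) atTop (𝓝 (h x)))
    (hu_xs' : ∀ i, Tendsto (u i ∘ xs) atTop (𝓝 (u i x))) :
    Tendsto (fun n ↦ u n x) atTop (𝓝 (h x)) := by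
  obtain ⟨c, -, hc⟩ := isCompact_univ.exists_mapClusterPt (f := atTop) (u := xs)
    (le_principal_iff.2 univ_mem)
  have hc_eq : ∀ g : K → Y, Continuous g → Tendsto (g ∘ xs) atTop (𝓝 (g x)) → g c = g x :=
    fun g hg hgx ↦ (hc.continuousAt_comp hg.continuousAt).eq_of_tendsto hgx
  by_contra hx
  obtain ⟨V, hV, hfreq⟩ := not_tendsto_iff_exists_frequently_notMem.1 hx
  set l := atTop ⊓ 𝓟 {n | u n x ∉ V}
  obtain ⟨g, hgH, hg⟩ := hH.exists_mapClusterPt_of_frequently (l := l) (f := u)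
    (frequently_inf_principal.2 (hfreq.mono fun n hn ↦ ⟨hn, hu n⟩))
  have hg_xs : ∀ m, g (xs m) = h (xs m) := fun m ↦
    (hg.continuousAt_comp (continuous_apply (xs m)).continuousAt).eq_of_tendsto
      ((hu_xs m).mono_left inf_le_left)
  have hgc : g c = h x := by
    rw [← hc_eq h hh hh_xs]
    exact (isClosed_eq (hHc g hgH) hh).mem_of_mapClusterPt hc (Eventually.of_forall hg_xs)
  have hgx : MapClusterPt (h x) l (fun n ↦ u n x) := by
    rw [← hgc]
    exact (hg.continuousAt_comp (continuous_apply c).continuousAt).congrFun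
      (Eventually.of_forall fun n ↦ hc_eq (u n) (hHc _ (hu n)) (hu_xs' n))
  obtain ⟨n, hnV, hnV'⟩ := ((hgx.frequently hV).and_eventually
    (mem_inf_of_right (mem_principal_self _))).exists
  exact hnV' hnV

theorem exists_finset_forall_dist_lt {K X : Type*} [TopologicalSpace K] [CompactSpace K]
    [PseudoMetricSpace X] {Φ : K → X} (hΦ : Continuous Φ) {ε : ℝ} (hε : 0 < ε) :
    ∃ T : Finset K, ∀ x, ∃ x' ∈ T, dist (Φ x) (Φ x') < ε := by
  obtain ⟨T, -, hT⟩ := isCompact_univ.elim_nhds_subcover (fun c ↦ {y | dist (Φ y) (Φ c) < ε})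
    fun c _ ↦ (hΦ.tendsto c).eventually (Metric.ball_mem_nhds _ hε)
  refine ⟨T, fun x ↦ ?_⟩
  obtain ⟨c, hc, hxc⟩ := mem_iUnion₂.1 (hT (mem_univ x))
  exact ⟨c, hc, hxc⟩

theorem exists_mem_forall_dist_lt_of_mem_closure {K X : Type*} [PseudoMetricSpace X]
    {A : Set (K → X)} {h : K → X} (hh : h ∈ closure A) (T : Finset K) {ε : ℝ} (hε : 0 < ε) :
    ∃ g ∈ A, ∀ x ∈ T, dist (g x) (h x) < ε := by
  have hnhds : ∀ᶠ g in 𝓝 h, ∀ x ∈ T, dist (g x) (h x) < ε :=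
    (eventually_all_finset T).2 fun x _ ↦
      ((continuous_apply x).tendsto h).eventually (Metric.ball_mem_nhds _ hε)
  obtain ⟨g, hgT, hgA⟩ := (hnhds.and_frequently (mem_closure_iff_frequently.1 hh)).exists
  exact ⟨g, hgA, hgT⟩

theorem tendsto_of_eventually_dist_lt_one_div {X : Type*} [PseudoMetricSpace X] {a : ℕ → X}
    {b : X} (h : ∀ᶠ n in atTop, dist (a n) b < 1 / ((n : ℝ) + 1)) : Tendsto a atTop (𝓝 b) :=
  tendsto_iff_dist_tendsto_zero.2 <| squeeze_zero' (Eventually.of_forall fun _ ↦ dist_nonneg)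
    (h.mono fun _ ↦ le_of_lt) tendsto_one_div_add_atTop_nhds_zero_nat

-- `u n` is chosen `1/(n+1)`-close to `h` on a finite set containing `1/(m+1)`-nets (`m ≤ n`)
-- for `h, u 0, …, u (m-1)`; the points `xs m` are taken from these nets.
theorem exists_seq_approx_of_mem_closure {K X : Type*} [TopologicalSpace K] [CompactSpace K]
    [PseudoMetricSpace X] {A : Set (K → X)} (hA : ∀ g ∈ A, Continuous g) {h : K → X}
    (hh : Continuous h) (hcl : h ∈ closure A) :
    ∃ u : ℕ → K → X, (∀ n, u n ∈ A) ∧ ∀ x, ∃ xs : ℕ → K,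
      (∀ m, Tendsto (fun n ↦ u n (xs m)) atTop (𝓝 (h (xs m)))) ∧
      Tendsto (h ∘ xs) atTop (𝓝 (h x)) ∧ ∀ i, Tendsto (u i ∘ xs) atTop (𝓝 (u i x)) := by
  classical
  have hε : ∀ n : ℕ, (0 : ℝ) < 1 / (n + 1) := fun n ↦ Nat.one_div_pos_of_nat
  have hnet (G : Finset C(K, X)) (n : ℕ) : ∃ T : Finset K,
      ∀ x, ∃ x' ∈ T, ∀ g ∈ G, dist (g x) (g x') < 1 / (n + 1) := by
    obtain ⟨T, hT⟩ := exists_finset_forall_dist_lt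
      (Φ := fun x (g : G) ↦ (g : C(K, X)) x) (by fun_prop) (hε n)
    exact ⟨T, fun x ↦ (hT x).imp fun x' ⟨hx'T, hx'⟩ ↦
      ⟨hx'T, fun g hg ↦ (dist_pi_lt_iff (hε n)).1 hx' ⟨g, hg⟩⟩⟩
  have happrox (T : Finset K) (n : ℕ) : ∃ g : C(K, X),
      ⇑g ∈ A ∧ ∀ x ∈ T, dist (g x) (h x) < 1 / (n + 1) := by
    obtain ⟨g, hgA, hgT⟩ := exists_mem_forall_dist_lt_of_mem_closure hcl T (hε n)
    exact ⟨⟨g, hA g hgA⟩, hgA, hgT⟩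
  choose net hnet using hnet
  choose approx happrox_mem happrox using happrox
  -- `S n` holds `h, u 0, …, u (n-1)` and the union of the first `n` nets
  let S : ℕ → Finset C(K, X) × Finset K := fun n ↦ Nat.rec ({⟨h, hh⟩}, ∅)
    (fun n s ↦ (insert (approx (s.2 ∪ net s.1 n) n) s.1, s.2 ∪ net s.1 n)) n
  let u : ℕ → C(K, X) := fun n ↦ approx (S (n + 1)).2 n
  have hT_mono : Monotone fun n ↦ (S n).2 :=
    monotone_nat_of_le_succ fun n ↦ Finset.subset_union_left (s₂ := net (S n).1 n)
  have hG_mono : Monotone fun n ↦ (S n).1 :=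
    monotone_nat_of_le_succ fun n ↦ Finset.subset_insert (u n) (S n).1
  refine ⟨fun n ↦ u n, fun n ↦ happrox_mem _ n, fun x ↦ ?_⟩
  choose xs hxs_mem hxs using fun m ↦ hnet (S m).1 m x
  refine ⟨xs, fun m ↦ ?_, ?_, fun i ↦ ?_⟩
  · refine tendsto_of_eventually_dist_lt_one_div ((eventually_ge_atTop m).mono fun n hn ↦ ?_)
    exact happrox _ n (xs m)
      (hT_mono (Nat.succ_le_succ hn) (Finset.mem_union_right _ (hxs_mem m)))
  · refine tendsto_of_eventually_dist_lt_one_div (Eventually.of_forall fun m ↦ ?_)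
    rw [dist_comm]
    exact hxs m ⟨h, hh⟩ (hG_mono (Nat.zero_le m) (Finset.mem_singleton_self _))
  · refine tendsto_of_eventually_dist_lt_one_div ((eventually_gt_atTop i).mono fun m hm ↦ ?_)
    rw [dist_comm]
    exact hxs m (u i) (hG_mono hm (Finset.mem_insert_self _ _))

theorem exists_seq_tendsto_of_mem_closure {K X : Type*} [TopologicalSpace K] [CompactSpace K]
    [MetricSpace X] {H : Set (K → X)} (hH : IsCompact H) (hHc : ∀ g ∈ H, Continuous g)
    {A : Set (K → X)} (hAH : A ⊆ H) {h : K → X} (hcl : h ∈ closure A) :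
    ∃ u : ℕ → K → X, (∀ n, u n ∈ A) ∧ Tendsto u atTop (𝓝 h) := by
  have hh : Continuous h := hHc h (hH.isClosed.closure_subset_iff.2 hAH hcl)
  obtain ⟨u, huA, hu⟩ := exists_seq_approx_of_mem_closure (fun g hg ↦ hHc g (hAH hg)) hh hcl
  refine ⟨u, huA, tendsto_pi_nhds.2 fun x ↦ ?_⟩
  obtain ⟨xs, hu_xs, hh_xs, hu_xs'⟩ := hu x
  exact tendsto_apply_of_tendsto_apply_approx hH hHc (fun n ↦ hAH (huA n)) hh hu_xs hh_xs hu_xs'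

theorem continuousOn_integral_of_isCompact {K : Type*} [TopologicalSpace K] [CompactSpace K]
    [MeasurableSpace K] [OpensMeasurableSpace K] (μ : Measure K) [IsFiniteMeasure μ]
    {H : Set (K → ℝ)} (hH : IsCompact H) (hHc : ∀ g ∈ H, Continuous g) {C : ℝ}
    (hC : ∀ g ∈ H, ∀ x, ‖g x‖ ≤ C) :
    ContinuousOn (fun g ↦ ∫ x, g x ∂μ) H := by
  intro g hg
  by_contra hnot
  obtain ⟨V, hV, hfreq⟩ := not_tendsto_iff_exists_frequently_notMem.1 hnot
  obtain ⟨u, hu, hug⟩ := exists_seq_tendsto_of_mem_closure hH hHc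
    (sep_subset H fun g' ↦ ∫ x, g' x ∂μ ∉ V)
    (mem_closure_iff_frequently.2 ((frequently_nhdsWithin_iff.1 hfreq).mono fun _ h ↦ ⟨h.2, h.1⟩))
  have hint : Tendsto (fun n ↦ ∫ x, u n x ∂μ) atTop (𝓝 (∫ x, g x ∂μ)) :=
    tendsto_integral_of_dominated_convergence (fun _ ↦ C)
      (fun n ↦ (hHc _ (hu n).1).aestronglyMeasurable) (integrable_const C)
      (fun n ↦ Eventually.of_forall (hC _ (hu n).1))
      (Eventually.of_forall (tendsto_pi_nhds.1 hug))
  obtain ⟨n, hn⟩ := (hint.eventually hV).exists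
  exact (hu n).2 hn

theorem continuous_integral_of_separately_continuous {K Y : Type*} [TopologicalSpace K]
    [CompactSpace K] [MeasurableSpace K] [OpensMeasurableSpace K] [TopologicalSpace Y]
    [CompactSpace Y] (μ : Measure K) [IsFiniteMeasure μ] {f : Y → K → ℝ}
    (hK : ∀ y, Continuous (f y)) (hY : ∀ x, Continuous fun y ↦ f y x) {C : ℝ}
    (hC : ∀ y x, ‖f y x‖ ≤ C) :
    Continuous fun y ↦ ∫ x, f y x ∂μ :=
  (continuousOn_integral_of_isCompact μ (isCompact_range (continuous_pi hY))
    (forall_mem_range.2 hK) (forall_mem_range.2 hC)).comp_continuous (continuous_pi hY)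
    mem_range_self

theorem continuous_abs_sub_inv_smul {F Z : Type*} [Group F] [TopologicalSpace F] [ContinuousInv F]
    [TopologicalSpace Z] [MulAction F Z] (φ : C(Z, ℝ))
    (hcont : ∀ z : Z, Continuous fun f : F ↦ f • z) (z w : Z) :
    Continuous fun f : F ↦ |φ (f⁻¹ • z) - φ (f⁻¹ • w)| := by
  have := hcont z; have := hcont w
  fun_prop

section OrbitDist

variable {F Z : Type*} [Group F] [MeasurableSpace F] [TopologicalSpace Z] [MulAction F Z]
  (μ : Measure F) (φ : C(Z, ℝ))

noncomputable def orbitDist (z w : Z) : ℝ :=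
  ∫ f, |φ (f⁻¹ • z) - φ (f⁻¹ • w)| ∂μ

@[simp]
theorem orbitDist_self (z : Z) : orbitDist μ φ z z = 0 := by
  simp [orbitDist]

theorem orbitDist_nonneg (z w : Z) : 0 ≤ orbitDist μ φ z w :=
  integral_nonneg fun _ ↦ abs_nonneg _

theorem orbitDist_smul [MeasurableMul F] [μ.IsMulLeftInvariant] (g : F) (z w : Z) :
    orbitDist μ φ (g • z) (g • w) = orbitDist μ φ z w := by
  simpa [orbitDist, mul_smul] using
    integral_mul_left_eq_self (fun f : F ↦ |φ (f⁻¹ • z) - φ (f⁻¹ • w)|) g⁻¹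

variable [TopologicalSpace F] [ContinuousInv F] [CompactSpace F] [OpensMeasurableSpace F]

theorem integrable_abs_sub_inv_smul [IsFiniteMeasure μ]
    (hcont : ∀ z : Z, Continuous fun f : F ↦ f • z) (z w : Z) :
    Integrable (fun f : F ↦ |φ (f⁻¹ • z) - φ (f⁻¹ • w)|) μ :=
  (continuous_abs_sub_inv_smul φ hcont z w).integrable_of_hasCompactSupport
    (HasCompactSupport.of_compactSpace _)

theorem orbitDist_triangle [IsFiniteMeasure μ] (hcont : ∀ z : Z, Continuous fun f : F ↦ f • z)
    (z y w : Z) : orbitDist μ φ z w ≤ orbitDist μ φ z y + orbitDist μ φ y w := by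
  have hint := integrable_abs_sub_inv_smul μ φ hcont
  rw [orbitDist, orbitDist, orbitDist, ← integral_add (hint z y) (hint y w)]
  exact integral_mono (hint z w) ((hint z y).add (hint y w)) fun f ↦ abs_sub_le _ _ _

theorem orbitDist_pos [IsFiniteMeasure μ] [μ.IsOpenPosMeasure]
    (hcont : ∀ z : Z, Continuous fun f : F ↦ f • z) {z w : Z} (hzw : φ z ≠ φ w) :
    0 < orbitDist μ φ z w :=
  integral_pos_of_integrable_nonneg_nonzero (x := 1) (continuous_abs_sub_inv_smul φ hcont z w)
    (integrable_abs_sub_inv_smul μ φ hcont z w) (fun _ ↦ abs_nonneg _)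
    (by simpa [sub_eq_zero] using hzw)

theorem continuous_orbitDist [IsFiniteMeasure μ] [CompactSpace Z] [ContinuousConstSMul F Z]
    (hcont : ∀ z : Z, Continuous fun f : F ↦ f • z) :
    Continuous fun p : Z × Z ↦ orbitDist μ φ p.1 p.2 :=
  continuous_integral_of_separately_continuous μ
    (fun p ↦ continuous_abs_sub_inv_smul φ hcont p.1 p.2) (fun f ↦ by fun_prop)
    (C := ‖φ‖ + ‖φ‖) fun p f ↦ by
      simpa only [Real.norm_eq_abs, abs_abs] using
        norm_sub_le_of_le (φ.norm_coe_le_norm _) (φ.norm_coe_le_norm _)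

end OrbitDist

theorem tendsto_orbitDist_smul {F Z : Type*} [Group F] [TopologicalSpace F] [ContinuousInv F]
    [CompactSpace F] [MeasurableSpace F] [OpensMeasurableSpace F] [MeasurableMul F]
    [TopologicalSpace Z] [CompactSpace Z] [MulAction F Z] [ContinuousConstSMul F Z]
    (μ : Measure F) [IsFiniteMeasure μ] [μ.IsMulLeftInvariant] (φ : C(Z, ℝ))
    (hcont : ∀ z : Z, Continuous fun f : F ↦ f • z) (f₀ : F) (z₀ : Z) :
    Tendsto (fun p : F × Z ↦ orbitDist μ φ (p.1 • p.2) (f₀ • z₀)) (𝓝 (f₀, z₀)) (𝓝 0) := by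
  have hd := continuous_orbitDist μ φ hcont
  have hbound : Continuous fun p : F × Z ↦
      orbitDist μ φ p.2 z₀ + orbitDist μ φ (p.1 • z₀) (f₀ • z₀) :=
    (hd.comp (continuous_snd.prodMk continuous_const)).add
      (hd.comp (((hcont z₀).comp continuous_fst).prodMk continuous_const))
  refine squeeze_zero (fun p ↦ orbitDist_nonneg μ φ _ _) (fun p ↦ ?_)
    (by simpa using hbound.tendsto (f₀, z₀))
  calc orbitDist μ φ (p.1 • p.2) (f₀ • z₀)
      ≤ orbitDist μ φ (p.1 • p.2) (p.1 • z₀) + orbitDist μ φ (p.1 • z₀) (f₀ • z₀) :=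
        orbitDist_triangle μ φ hcont _ _ _
    _ = orbitDist μ φ p.2 z₀ + orbitDist μ φ (p.1 • z₀) (f₀ • z₀) := by rw [orbitDist_smul]

theorem stmt10_general (F Z : Type*) [Group F] [TopologicalSpace F] [IsTopologicalGroup F]
    [CompactSpace F] [TopologicalSpace Z] [CompactSpace Z] [T2Space Z]
    [MulAction F Z]
    (h1 : ∀ f : F, Continuous fun z : Z => f • z)
    (h2 : ∀ z : Z, Continuous fun f : F => f • z) :
    Continuous fun p : F × Z => p.1 • p.2 := by
  borelize F
  have : ContinuousConstSMul F Z := ⟨h1⟩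
  let μ : Measure F := Measure.haarMeasure ⊤
  refine continuous_iff_continuousAt.2 fun p₀ ↦ tendsto_nhds_of_unique_mapClusterPt fun c hc ↦ ?_
  by_contra hne
  obtain ⟨φ, hφc, hφb, -⟩ := exists_continuous_zero_one_of_isClosed isClosed_singleton
    isClosed_singleton (disjoint_singleton.2 hne)
  have hcluster : MapClusterPt (orbitDist μ φ c (p₀.1 • p₀.2)) (𝓝 p₀)
      fun p : F × Z ↦ orbitDist μ φ (p.1 • p.2) (p₀.1 • p₀.2) :=
    hc.continuousAt_comp
      ((continuous_orbitDist μ φ h2).comp (continuous_id.prodMk continuous_const)).continuousAt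
  refine (orbitDist_pos μ φ h2 ?_).ne'
    (hcluster.eq_of_tendsto (tendsto_orbitDist_smul μ φ h2 _ _))
  simp [hφc rfl, hφb rfl]

/-- Ellis joint continuity, compact group case: a separately continuous
action of a compact Hausdorff topological group on a compact Hausdorff space is jointly
continuous. -/
theorem stmt10 (F Z : Type*) [Group F] [TopologicalSpace F] [IsTopologicalGroup F]
    [CompactSpace F] [T2Space F] [TopologicalSpace Z] [CompactSpace Z] [T2Space Z]
    [MulAction F Z]
    (h1 : ∀ f : F, Continuous fun z : Z => f • z)
    (h2 : ∀ z : Z, Continuous fun f : F => f • z) :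
    Continuous fun p : F × Z => p.1 • p.2 :=
  stmt10_general F Z h1 h2
end

section
/- Let G be a group and d ≥ 1, and suppose α_1, ..., α_{2^d} is an enumeration of all upper faces of {0,1}^d (faces containing the all-ones vertex) such that codim(α_j) is nondecreasing in j. Then the map Ψ(h_1, ..., h_{2^d}) = h_1^(α_1) · h_2^(α_2) · ... · h_{2^d}^(α_{2^d}), defined on the product ∏_{j=1}^{2^d} G_{codim(α_j)} of lower central series terms (with G_0 = G), is injective into G^{2^d}. -/
open scoped Classical Pointwise

noncomputable section

/-- The upper face of `{0,1}^d` determined by `S ⊆ [d]`: the coordinates in `S` are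
fixed to 1. Its codimension is `S.card`. -/
def upFace {d : ℕ} (S : Finset (Fin d)) : Set (Fin d → Bool) :=
  {ε | ∀ i ∈ S, ε i = true}

/-!
Evaluating `Ψ(h)` at the vertex `𝟙_T` of `{0,1}^d` (the indicator of `T ⊆ [d]`) keeps exactly
the factors `h_j` with `α_j = upFace S_j`, `S_j ⊆ T`, in their original order. The system is
therefore triangular with respect to inclusion: by strong induction on `T`, all factors except
the one with `S_j = T` are already known to agree, and cancelling them recovers `h_j`.
-/

open Function

theorem List.eq_of_prod_ofFn_eq_of_forall_ne {M : Type*} [CancelMonoid M] {n : ℕ}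
    {f g : Fin n → M} {j : Fin n} (hfg : ∀ i ≠ j, f i = g i)
    (h : (List.ofFn f).prod = (List.ofFn g).prod) : f j = g j := by
  have ofFn_eq_set : ∀ k : Fin n → M, (∀ i ≠ j, f i = k i) →
      List.ofFn k = (List.ofFn f).set j (k j) := by
    intro k hk
    refine List.ext_getElem (by simp) fun i hi _ => ?_
    rw [List.getElem_ofFn, List.getElem_set]
    split_ifs with hji
    · subst hji; rfl
    · rw [List.getElem_ofFn]
      exact (hk _ fun hij => hji (congrArg Fin.val hij).symm).symm
  rw [ofFn_eq_set f fun _ _ => rfl, ofFn_eq_set g hfg, List.prod_set, List.prod_set] at h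
  simpa using h

theorem indicator_mem_upFace_iff {d : ℕ} (S T : Finset (Fin d)) :
    (fun i => decide (i ∈ T)) ∈ upFace S ↔ S ⊆ T := by
  simp [upFace, Finset.subset_iff]

theorem list_prod_faceEl_upFace_apply_indicator {G : Type*} [Group G] {d n : ℕ}
    (s : Fin n → Finset (Fin d)) (h : Fin n → G) (T : Finset (Fin d)) :
    (List.ofFn fun j => faceEl (upFace (s j)) (h j)).prod (fun i => decide (i ∈ T)) =
      (List.ofFn fun j => if s j ⊆ T then h j else 1).prod := by
  rw [Pi.list_prod_apply, List.map_ofFn]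
  congr 2
  funext j
  simp only [comp_apply, faceEl, indicator_mem_upFace_iff]

theorem injective_list_prod_faceEl_upFace {G : Type*} [Group G] {d n : ℕ}
    {s : Fin n → Finset (Fin d)} (hs : Injective s) :
    Injective fun h : Fin n → G => (List.ofFn fun j => faceEl (upFace (s j)) (h j)).prod := by
  intro h h' heq
  suffices ∀ T j, s j = T → h j = h' j from funext fun j => this _ j rfl
  intro T
  induction T using Finset.strongInduction with
  | H T ih =>
    rintro j rfl
    have hvertex := congrFun heq fun i => decide (i ∈ s j)
    simp only [list_prod_faceEl_upFace_apply_indicator] at hvertex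
    have hcommon : ∀ i ≠ j, (if s i ⊆ s j then h i else 1) = if s i ⊆ s j then h' i else 1 := by
      intro i hij
      by_cases hsub : s i ⊆ s j
      · simp [hsub, ih _ (hsub.ssubset_of_ne (hs.ne hij)) i rfl]
      · simp [hsub]
    simpa using List.eq_of_prod_ofFn_eq_of_forall_ne hcommon hvertex

theorem stmt18_general (G : Type*) [Group G] (d : ℕ)
    (e : Fin (2 ^ d) → Finset (Fin d)) (hbij : Function.Bijective e)
    (h h' : Fin (2 ^ d) → G)
    (heq : (List.ofFn fun j => faceEl (upFace (e j)) (h j)).prod =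
           (List.ofFn fun j => faceEl (upFace (e j)) (h' j)).prod) :
    h = h' :=
  injective_list_prod_faceEl_upFace hbij.injective heq

/-- given an enumeration `e` of all upper faces of `{0,1}^d` with
nondecreasing codimension, the map
`Ψ(h₁,…,h_{2^d}) = h₁^(α₁) ⋯ h_{2^d}^(α_{2^d})`, defined on tuples with
`h j ∈ G_{codim(α_j)}` (where `G_0 = G_1 = G` and `G_k = lowerCentralSeries G (k-1)`),
is injective. -/
theorem stmt18 (G : Type*) [Group G] (d : ℕ) (hd : 1 ≤ d)
    (e : Fin (2 ^ d) → Finset (Fin d)) (hbij : Function.Bijective e)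
    (hmono : ∀ i j : Fin (2 ^ d), i ≤ j → (e i).card ≤ (e j).card)
    (h h' : Fin (2 ^ d) → G)
    (hh : ∀ j, h j ∈ (⊤ : Subgroup G).lowerCentralSeries ((e j).card - 1))
    (hh' : ∀ j, h' j ∈ (⊤ : Subgroup G).lowerCentralSeries ((e j).card - 1))
    (heq : (List.ofFn fun j => faceEl (upFace (e j)) (h j)).prod =
           (List.ofFn fun j => faceEl (upFace (e j)) (h' j)).prod) :
    h = h' :=
  stmt18_general G d e hbij h h' heq
end
end
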